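/- arXiv:2402.03103 — 4 statements merged into one kernel-verified Lean document; each statement's English description precedes it below -/
import Mathlib

section
/- The family of sets with the list operations is a model of the parameterized theory of nondeterminism with once. That is, for every n and all elements of the appropriate levels: orT n is associative; orT n x (failT n) = x; orT n (failT n) x = x; onceT n (failT (n+1)) = failT n; onceT n (orT (n+1) l l) = onceT n l; onceT n (closeT n x) = x; and onceT n (orT (n+1) (closeT n x) l) = x. -/
namespace Stmt0

/-- Auxiliary: `U A n = List^n A`. -/
abbrev U (A : Type) : ℕ → Type
  | 0 => A
  | n + 1 => List (U A n)

/-- `T A n = List^(n+1) A`: `T A 0 = List A` and `T A (n+1) = List (T A n)`. -/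
abbrev T (A : Type) (n : ℕ) : Type := List (U A n)

/-- Choice is list concatenation. -/
def orT (A : Type) (n : ℕ) (x y : T A n) : T A n := x ++ y

/-- Failure is the empty list. -/
def failT (A : Type) (n : ℕ) : T A n := []

/-- Closing a scope wraps its continuation as a singleton list. -/
def closeT (A : Type) (n : ℕ) (x : T A n) : T A (n + 1) := [x]

/-- `once` takes the head of the list (or fails on the empty list). -/
def onceT (A : Type) (n : ℕ) : T A (n + 1) → T A n
  | [] => failT A n
  | x :: _ => x

theorem stmt_0 (A : Type) :
    (∀ n (x y z : T A n), orT A n (orT A n x y) z = orT A n x (orT A n y z)) ∧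
    (∀ n (x : T A n), orT A n x (failT A n) = x) ∧
    (∀ n (x : T A n), orT A n (failT A n) x = x) ∧
    (∀ n, onceT A n (failT A (n + 1)) = failT A n) ∧
    (∀ n (l : T A (n + 1)), onceT A n (orT A (n + 1) l l) = onceT A n l) ∧
    (∀ n (x : T A n), onceT A n (closeT A n x) = x) ∧
    (∀ n (x : T A n) (l : T A (n + 1)),
      onceT A n (orT A (n + 1) (closeT A n x) l) = x) := by
  refine ⟨fun n x y z => List.append_assoc x y z, fun n x => List.append_nil x,
    fun n x => rfl, fun n => rfl, fun n l => ?_, fun n x => rfl, fun n x l => rfl⟩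
  cases l <;> rfl

end Stmt0
end

section
/- The family of sets with the exception operations is a model of the parameterized theory of throwing and catching exceptions: for every n and all elements of the appropriate levels, catchT n (throwT (n+1)) (closeT n y) = y; catchT n (throwT (n+1)) (throwT (n+1)) = throwT n; and catchT n (closeT n x) v = x for every v : TC (n+1). -/
namespace Stmt3

/-- `TC A n = A ⊕ Fin (n+1)`, the carrier of the free model for exceptions. -/
abbrev TC (A : Type) (n : ℕ) : Type := A ⊕ Fin (n + 1)

/-- `throw` is the exception `e_n`, the last element of `Fin (n+1)`. -/
def throwT (A : Type) (n : ℕ) : TC A n := Sum.inr (Fin.last n)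

/-- Closing a scope includes `TC A n` into `TC A (n+1)`. -/
def closeT (A : Type) (n : ℕ) : TC A n → TC A (n + 1) :=
  Sum.map id Fin.castSucc

/-- Split `TC A (n+1)` as `TC A n ⊕ {e_{n+1}}`. -/
def split (A : Type) (n : ℕ) : TC A (n + 1) → TC A n ⊕ Unit
  | Sum.inl a => Sum.inl (Sum.inl a)
  | Sum.inr i =>
    Fin.lastCases (Sum.inr ()) (fun j => Sum.inl (Sum.inr j)) i

/-- `catch`: if the first argument is the image of `x : TC A n`, return `x`;
if it is `e_{n+1}` and the second is the image of `x : TC A n`, return `x`;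
on two copies of `e_{n+1}`, return `e_n`. -/
def catchT (A : Type) (n : ℕ) (u v : TC A (n + 1)) : TC A n :=
  match split A n u with
  | Sum.inl x => x
  | Sum.inr _ =>
    match split A n v with
    | Sum.inl x => x
    | Sum.inr _ => throwT A n

lemma split_close (A : Type) (n : ℕ) (x : TC A n) :
    split A n (closeT A n x) = Sum.inl x := by
  cases x with
  | inl a => rfl
  | inr i => simp [split, closeT, Fin.lastCases_castSucc]

theorem stmt_3 (A : Type) :
    (∀ n (y : TC A n), catchT A n (throwT A (n + 1)) (closeT A n y) = y) ∧
    (∀ n, catchT A n (throwT A (n + 1)) (throwT A (n + 1)) = throwT A n) ∧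
    (∀ n (x : TC A n) (v : TC A (n + 1)), catchT A n (closeT A n x) v = x) := by
  refine ⟨fun n y => ?_, fun n => ?_, fun n x v => ?_⟩
  · have h1 : split A n (throwT A (n+1)) = Sum.inr () := by
      simp [split, throwT, Fin.lastCases_last]
    rw [catchT, h1, split_close]
  · have h1 : split A n (throwT A (n+1)) = Sum.inr () := by
      simp [split, throwT, Fin.lastCases_last]
    rw [catchT, h1]
  · rw [catchT, split_close]

end Stmt3
end

section
/- The family TC with the exception operations is the free model of the parameterized theory of throwing and catching exceptions on generators A: for every model Y (a family Y : ℕ → Type with operations throwY, catchY, closeY satisfying the listed equations) and every function f : A → Y 0, there exists a unique family of functions h : ∀ n, TC n → Y n such that h 0 (Sum.inl a) = f a for all a : A, and h is a homomorphism: h n (throwT n) = throwY n; h (n+1) (closeT n u) = closeY n (h n u); and h n (catchT n u v) = catchY n (h (n+1) u) (h (n+1) v). -/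
namespace Stmt4

/-- `TC A n = A ⊕ Fin (n+1)`, the carrier of the free model for exceptions. -/
abbrev TC (A : Type) (n : ℕ) : Type := A ⊕ Fin (n + 1)

/-- `throw` is the exception `e_n`, the last element of `Fin (n+1)`. -/
def throwT (A : Type) (n : ℕ) : TC A n := Sum.inr (Fin.last n)

/-- Closing a scope includes `TC A n` into `TC A (n+1)`. -/
def closeT (A : Type) (n : ℕ) : TC A n → TC A (n + 1) :=
  Sum.map id Fin.castSucc

/-- Split `TC A (n+1)` as `TC A n ⊕ {e_{n+1}}`. -/
def split (A : Type) (n : ℕ) : TC A (n + 1) → TC A n ⊕ Unit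
  | Sum.inl a => Sum.inl (Sum.inl a)
  | Sum.inr i =>
    Fin.lastCases (Sum.inr ()) (fun j => Sum.inl (Sum.inr j)) i

/-- `catch`: if the first argument is the image of `x : TC A n`, return `x`;
if it is `e_{n+1}` and the second is the image of `x : TC A n`, return `x`;
on two copies of `e_{n+1}`, return `e_n`. -/
def catchT (A : Type) (n : ℕ) (u v : TC A (n + 1)) : TC A n :=
  match split A n u with
  | Sum.inl x => x
  | Sum.inr _ =>
    match split A n v with
    | Sum.inl x => x
    | Sum.inr _ => throwT A n

section Aux
variable (Y : ℕ → Type) (throwY : ∀ n, Y n) (closeY : ∀ n, Y n → Y (n + 1))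

def closeIter : ∀ n, Y 0 → Y n
  | 0, y => y
  | n + 1, y => closeY n (closeIter n y)

def gfun : ∀ n, Fin (n + 1) → Y n
  | 0, _ => throwY 0
  | n + 1, i => Fin.lastCases (throwY (n + 1)) (fun j => closeY n (gfun n j)) i

lemma gfun_last : ∀ n, gfun Y throwY closeY n (Fin.last n) = throwY n
  | 0 => rfl
  | n + 1 => by simp [gfun]

lemma gfun_castSucc (n : ℕ) (j : Fin (n + 1)) :
    gfun Y throwY closeY (n + 1) (Fin.castSucc j) = closeY n (gfun Y throwY closeY n j) := by
  simp [gfun]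

end Aux

/-- `TC` is the free model of the parameterized theory of throwing and
catching exceptions on generators `A`. -/
theorem stmt_4 (A : Type) (Y : ℕ → Type)
    (throwY : ∀ n, Y n)
    (catchY : ∀ n, Y (n + 1) → Y (n + 1) → Y n)
    (closeY : ∀ n, Y n → Y (n + 1))
    (catch_throw_close : ∀ n (y : Y n),
      catchY n (throwY (n + 1)) (closeY n y) = y)
    (catch_throw_throw : ∀ n,
      catchY n (throwY (n + 1)) (throwY (n + 1)) = throwY n)
    (catch_close : ∀ n (x : Y n) (v : Y (n + 1)),
      catchY n (closeY n x) v = x)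
    (f : A → Y 0) :
    ∃! h : ∀ n, TC A n → Y n,
      (∀ a : A, h 0 (Sum.inl a) = f a) ∧
      (∀ n, h n (throwT A n) = throwY n) ∧
      (∀ n (u : TC A n), h (n + 1) (closeT A n u) = closeY n (h n u)) ∧
      (∀ n (u v : TC A (n + 1)),
        h n (catchT A n u v) = catchY n (h (n + 1) u) (h (n + 1) v)) := by
  set h : ∀ n, TC A n → Y n := fun n u =>
    Sum.elim (fun a => closeIter Y closeY n (f a)) (gfun Y throwY closeY n) u with hh
  have hthrow : ∀ n, h n (throwT A n) = throwY n := fun n => gfun_last Y throwY closeY n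
  have hclose : ∀ n (u : TC A n), h (n + 1) (closeT A n u) = closeY n (h n u) := by
    intro n u
    cases u with
    | inl a => rfl
    | inr j => exact gfun_castSucc Y throwY closeY n j
  refine ⟨h, ⟨fun a => rfl, hthrow, hclose, ?_⟩, ?_⟩
  · -- catch homomorphism
    intro n u v
    have key : ∀ w : TC A (n + 1),
        (∃ x : TC A n, w = closeT A n x ∧ split A n w = Sum.inl x) ∨
        (w = throwT A (n + 1) ∧ split A n w = Sum.inr ()) := by
      intro w
      cases w with
      | inl a => exact Or.inl ⟨Sum.inl a, rfl, rfl⟩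
      | inr i =>
        induction i using Fin.lastCases with
        | last => exact Or.inr ⟨rfl, by simp [split]⟩
        | cast j =>
          exact Or.inl ⟨Sum.inr j, rfl, by simp [split]⟩
    rcases key u with ⟨x, rfl, hs⟩ | ⟨rfl, hs⟩
    · rw [hclose, catch_close]
      unfold catchT
      rw [hs]
    · rcases key v with ⟨x, rfl, hs'⟩ | ⟨rfl, hs'⟩
      · rw [hthrow, hclose, catch_throw_close]
        unfold catchT
        rw [hs, hs']
      · unfold catchT
        rw [hs]
        show h n (throwT A n) = _
        rw [hthrow, hthrow, catch_throw_throw]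
  · -- uniqueness
    rintro h' ⟨h0, hthrow', hclose', _⟩
    have main : ∀ n (u : TC A n), h' n u = h n u := by
      intro n
      induction n with
      | zero =>
        intro u
        cases u with
        | inl a => exact h0 a
        | inr i =>
          have : i = Fin.last 0 := Fin.ext (by omega)
          subst this
          rw [show (Sum.inr (Fin.last 0) : TC A 0) = throwT A 0 from rfl,
            hthrow', hthrow]
      | succ n ih =>
        intro u
        cases u with
        | inl a =>
          have : (Sum.inl a : TC A (n + 1)) = closeT A n (Sum.inl a) := rfl
          rw [this, hclose', hclose, ih]
        | inr i =>
          induction i using Fin.lastCases with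
          | last =>
            rw [show (Sum.inr (Fin.last (n + 1)) : TC A (n + 1)) = throwT A (n + 1) from rfl,
              hthrow', hthrow]
          | cast j =>
            have : (Sum.inr (Fin.castSucc j) : TC A (n + 1)) = closeT A n (Sum.inr j) := rfl
            rw [this, hclose', hclose, ih]
    funext n u
    exact main n u

end Stmt4
end

section
/- In any interpretation of the algebraic theory of single-bit mutable state, the get-after-get equation is derivable: if a type M has operations put : Bool → M → M and get : M → M → M satisfying, for all i, j : Bool and all x, x0, x1 : M, put i (get x0 x1) = put i (if i then x1 else x0), put i (put j x) = put j x, and get (put false x) (put true x) = x, then for all x00, x01, x10, x11 : M, get (get x00 x01) (get x10 x11) = get x00 x11. -/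
/-- In any interpretation of the algebraic theory of single-bit mutable state,
the get-after-get equation is derivable. -/
theorem stmt_12 (M : Type)
    (put : Bool → M → M) (get : M → M → M)
    (put_get : ∀ (i : Bool) (x0 x1 : M),
      put i (get x0 x1) = put i (if i then x1 else x0))
    (put_put : ∀ (i j : Bool) (x : M), put i (put j x) = put j x)
    (get_put : ∀ x : M, get (put false x) (put true x) = x) :
    ∀ x00 x01 x10 x11 : M,
      get (get x00 x01) (get x10 x11) = get x00 x11 := by
  intro x00 x01 x10 x11
  have h1 := get_put (get (get x00 x01) (get x10 x11))
  have h2 := get_put (get x00 x11)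
  simp only [put_get, Bool.false_eq_true, ite_false, ite_true] at h1 h2
  rw [← h1, ← h2]
end
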